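/- arXiv:1103.5089 — 4 statements merged into one kernel-verified Lean document; each statement's English description precedes it below -/
import Mathlib

section
/- Let X be a metric measure space satisfying exponential volume growth with constants κ, λ, and let a ≥ 1 be a constant. Suppose t ∈ (0,1] and Q, R are subsets of X with centers x_Q, x_R such that B(x_Q, a₀ l) ⊆ Q ⊆ B(x_Q, a₁ l) and B(x_R, a₀ l) ⊆ R ⊆ B(x_R, a₁ l) where l = l(Q) = l(R) ∈ [t, t/δ) and a = max{1, a₁/δ}. Then μ(Q)/μ(R) ≲ ⟨t/ρ(Q,R)⟩^{-κ} e^{a λ ρ(Q,R)}, where ⟨x⟩ := min{1, x} and ρ(Q,R) is the distance between the sets Q and R, with implicit constant depending only on the growth constants, a₀, a₁, δ. -/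
set_option maxHeartbeats 800000


open MeasureTheory Metric ENNReal

/-- Distance between two subsets of a metric space. -/
noncomputable def setDist {X : Type*} [MetricSpace X] (Q R : Set X) : ℝ :=
  sInf (Set.image2 dist Q R)

/-- `⟨t/ρ⟩ = min{1, t/ρ}`, written so that `ρ = 0` gives the value `1`. -/
noncomputable def ang (t ρ : ℝ) : ℝ := (max 1 (ρ / t))⁻¹

/-- On a metric measure space with exponential volume growth,
for dyadic-cube-like sets `Q, R` at scale `t ∈ (0,1]` (each containing a ball of
radius `a₀ l` and contained in a ball of radius `a₁ l` with `t ≤ l < t/δ`), one has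
`μ(Q)/μ(R) ≲ ⟨t/ρ(Q,R)⟩^{-κ} e^{a λ ρ(Q,R)}` with `a = max{1, a₁/δ}` and an
implicit constant depending only on the growth constants and `a₀, a₁, δ`. -/
theorem stmt1 {X : Type*} [MetricSpace X] [MeasurableSpace X]
    (μ : Measure X) (c κ lam a₀ a₁ δ : ℝ) (hc : 1 ≤ c) (hκ : 0 ≤ κ) (hlam : 0 ≤ lam)
    (ha₀ : 0 < a₀) (ha₀₁ : a₀ ≤ a₁) (hδ : δ ∈ Set.Ioo (0:ℝ) 1)
    (hE : ∀ (x : X) (α r : ℝ), 1 ≤ α → 0 < r →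
      0 < μ (ball x r) ∧
      μ (ball x (α * r)) ≤
        ENNReal.ofReal (c * α ^ κ * Real.exp (lam * α * r)) * μ (ball x r) ∧
      μ (ball x (α * r)) < ∞) :
    ∃ C > 0, ∀ (t l : ℝ) (Q R : Set X) (xQ xR : X),
      t ∈ Set.Ioc (0:ℝ) 1 → t ≤ l → l < t / δ →
      ball xQ (a₀ * l) ⊆ Q → Q ⊆ ball xQ (a₁ * l) →
      ball xR (a₀ * l) ⊆ R → R ⊆ ball xR (a₁ * l) →
      μ Q ≤ ENNReal.ofReal
          (C * ang t (setDist Q R) ^ (-κ) *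
            Real.exp (max 1 (a₁ / δ) * lam * setDist Q R)) * μ R := by
  obtain ⟨hδ0, hδ1⟩ := hδ
  set K : ℝ := (1 + 3 * a₁) / a₀ with hK
  have ha₁ : 0 < a₁ := ha₀.trans_le ha₀₁
  have hK1 : 1 ≤ K := by
    rw [hK, le_div_iff₀ ha₀]; nlinarith
  refine ⟨c * K ^ κ * Real.exp (3 * a₁ * lam / δ), by positivity, ?_⟩
  intro t l Q R xQ xR ht htl hlδ hQ1 hQ2 hR1 hR2
  obtain ⟨ht0, ht1⟩ := ht
  have hl0 : 0 < l := ht0.trans_le htl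
  set ρ : ℝ := setDist Q R with hρ
  have hxQ : xQ ∈ Q := hQ1 (mem_ball_self (by positivity))
  have hxR : xR ∈ R := hR1 (mem_ball_self (by positivity))
  have hne : (Set.image2 dist Q R).Nonempty := ⟨_, Set.mem_image2_of_mem hxQ hxR⟩
  have hρ0 : 0 ≤ ρ := Real.sInf_nonneg (by rintro d ⟨q, hq, r, hr, rfl⟩; exact dist_nonneg)
  have hdxx : dist xQ xR ≤ ρ + 2 * a₁ * l := by
    have : dist xQ xR - 2 * a₁ * l ≤ ρ := by
      apply le_csInf hne
      rintro d ⟨q, hq, r, hr, rfl⟩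
      have h1 : dist q xQ < a₁ * l := mem_ball.mp (hQ2 hq)
      have h2 : dist r xR < a₁ * l := mem_ball.mp (hR2 hr)
      have := dist_triangle4 xQ q r xR
      rw [dist_comm xQ q] at this
      linarith
    linarith
  have hQball : Q ⊆ ball xR (ρ + 3 * a₁ * l) := by
    intro q hq
    have h1 : dist q xQ < a₁ * l := mem_ball.mp (hQ2 hq)
    have := dist_triangle q xQ xR
    simp only [mem_ball]
    linarith
  set α : ℝ := (ρ + 3 * a₁ * l) / (a₀ * l) with hα
  have hα1 : 1 ≤ α := by
    rw [hα, le_div_iff₀ (by positivity)]; nlinarith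
  have hα0 : 0 ≤ α := le_trans zero_le_one hα1
  have hαr : α * (a₀ * l) = ρ + 3 * a₁ * l := by
    rw [hα, div_mul_cancel₀ _ (by positivity : (a₀ * l) ≠ 0)]
  set M : ℝ := max 1 (ρ / t) with hM
  have hM1 : 1 ≤ M := le_max_left _ _
  have hM0 : 0 < M := lt_of_lt_of_le one_pos hM1
  have hαKM : α ≤ K * M := by
    have hρM : ρ ≤ M * l := by
      have h : ρ / t ≤ M := le_max_right _ _
      calc ρ = (ρ / t) * t := by field_simp
      _ ≤ M * l := mul_le_mul h htl ht0.le hM0.le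
    have hKa : K * a₀ = 1 + 3 * a₁ := by rw [hK]; field_simp
    rw [hα, div_le_iff₀ (by positivity)]
    nlinarith [mul_le_mul_of_nonneg_left hM1 (by positivity : (0:ℝ) ≤ 3 * a₁ * l)]
  have hl1δ : l ≤ 1 / δ :=
    hlδ.le.trans ((div_le_div_iff_of_pos_right hδ0).mpr ht1)
  -- key real inequality
  have hreal : c * α ^ κ * Real.exp (lam * α * (a₀ * l)) ≤
      c * K ^ κ * Real.exp (3 * a₁ * lam / δ) * M ^ κ *
        Real.exp (max 1 (a₁ / δ) * lam * ρ) := by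
    have hαpow : α ^ κ ≤ K ^ κ * M ^ κ := by
      rw [← Real.mul_rpow (by positivity) hM0.le]
      exact Real.rpow_le_rpow hα0 hαKM hκ
    have hexp : Real.exp (lam * α * (a₀ * l)) ≤
        Real.exp (3 * a₁ * lam / δ) * Real.exp (max 1 (a₁ / δ) * lam * ρ) := by
      rw [← Real.exp_add]
      apply Real.exp_le_exp.mpr
      have h1 : lam * α * (a₀ * l) = lam * (ρ + 3 * a₁ * l) := by
        rw [mul_assoc, hαr]
      rw [h1]
      have h2 : lam * ρ ≤ max 1 (a₁ / δ) * lam * ρ := by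
        nlinarith [le_max_left 1 (a₁ / δ), mul_nonneg hlam hρ0]
      have h3 : lam * (3 * a₁ * l) ≤ 3 * a₁ * lam / δ := by
        have : 3 * a₁ * l ≤ 3 * a₁ / δ := by
          calc 3 * a₁ * l ≤ 3 * a₁ * (1 / δ) := by nlinarith
          _ = 3 * a₁ / δ := by ring
        calc lam * (3 * a₁ * l) ≤ lam * (3 * a₁ / δ) := by nlinarith
        _ = 3 * a₁ * lam / δ := by ring
      linarith [h2, h3, (by ring : lam * (ρ + 3 * a₁ * l) = lam * ρ + lam * (3 * a₁ * l))]
    calc c * α ^ κ * Real.exp (lam * α * (a₀ * l))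
        ≤ c * (K ^ κ * M ^ κ) *
            (Real.exp (3 * a₁ * lam / δ) * Real.exp (max 1 (a₁ / δ) * lam * ρ)) := by
          have hc0 : (0:ℝ) ≤ c := le_trans zero_le_one hc
          exact mul_le_mul (mul_le_mul_of_nonneg_left hαpow hc0) hexp
            (Real.exp_pos _).le (by positivity)
      _ = _ := by ring
  have hang : ang t ρ ^ (-κ) = M ^ κ := by
    rw [ang, ← hM, Real.inv_rpow hM0.le, Real.rpow_neg hM0.le, inv_inv]
  calc μ Q ≤ μ (ball xR (α * (a₀ * l))) := by
        rw [hαr]; exact measure_mono hQball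
    _ ≤ ENNReal.ofReal (c * α ^ κ * Real.exp (lam * α * (a₀ * l))) * μ (ball xR (a₀ * l)) :=
        (hE xR α (a₀ * l) hα1 (by positivity)).2.1
    _ ≤ ENNReal.ofReal
          (c * K ^ κ * Real.exp (3 * a₁ * lam / δ) * ang t ρ ^ (-κ) *
            Real.exp (max 1 (a₁ / δ) * lam * ρ)) * μ R := by
        apply mul_le_mul'
        · apply ENNReal.ofReal_le_ofReal
          rw [hang]; exact hreal
        · exact measure_mono hR1
end

section
/- Let γ: [0,1] → ℝⁿ be a smooth closed curve (parametrized by arc length, with γ(0) = γ(1) and matching derivatives). Then the total curvature ∫ |γ''(s)| ds ≥ 2π. -/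
open Real intervalIntegral
open scoped RealInnerProductSpace

section helpers

variable {E : Type*} [NormedAddCommGroup E] [InnerProductSpace ℝ E]

lemma inner_self_deriv_zero (T : ℝ → E) (hT : Differentiable ℝ T)
    (hunit : ∀ s, ‖T s‖ = 1) (s : ℝ) : ⟪T s, deriv T s⟫ = 0 := by
  have h2 : HasDerivAt (fun t => ⟪T t, T t⟫) (⟪T s, deriv T s⟫ + ⟪deriv T s, T s⟫) s :=
    HasDerivAt.inner ℝ (hT s).hasDerivAt (hT s).hasDerivAt
  have h1 : (fun t : ℝ => ⟪T t, T t⟫) = fun _ => (1:ℝ) := by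
    funext t
    rw [real_inner_self_eq_norm_sq, hunit t]; norm_num
  rw [h1] at h2
  have h3 := h2.unique (hasDerivAt_const s (1:ℝ))
  have hcm : ⟪T s, deriv T s⟫ = ⟪deriv T s, T s⟫ := real_inner_comm _ _
  have h4 : ⟪deriv T s, T s⟫ = 0 := by linarith
  rw [real_inner_comm]; exact h4

lemma abs_inner_deriv_le (T : ℝ → E) (hT : Differentiable ℝ T)
    (hunit : ∀ s, ‖T s‖ = 1) (u : E) (hu : ‖u‖ = 1) (s : ℝ) :
    |⟪u, deriv T s⟫| ≤ Real.sqrt (1 - ⟪u, T s⟫ ^ 2) * ‖deriv T s‖ := by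
  set c : ℝ := ⟪u, T s⟫ with hc
  have horth := inner_self_deriv_zero T hT hunit s
  have hw : ⟪u - c • T s, deriv T s⟫ = ⟪u, deriv T s⟫ := by
    rw [inner_sub_left, real_inner_smul_left, horth]; ring
  have hnw : ‖u - c • T s‖ ^ 2 = 1 - c ^ 2 := by
    have h1 : ⟪u - c • T s, u - c • T s⟫ = 1 - c ^ 2 := by
      have e1 : ⟪T s, u⟫ = c := by rw [real_inner_comm]
      have e2 : ⟪u, T s⟫ = c := hc.symm
      have e3 : ⟪T s, T s⟫ = 1 := by simp [real_inner_self_eq_norm_sq, hunit s]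
      have e4 : ⟪u, u⟫ = 1 := by simp [real_inner_self_eq_norm_sq, hu]
      simp only [inner_sub_left, inner_sub_right, real_inner_smul_left, real_inner_smul_right,
        e1, e2, e3, e4]
      ring
    rw [← real_inner_self_eq_norm_sq, h1]
  calc |⟪u, deriv T s⟫| = |⟪u - c • T s, deriv T s⟫| := by rw [hw]
    _ ≤ ‖u - c • T s‖ * ‖deriv T s‖ := abs_real_inner_le_norm _ _
    _ = Real.sqrt (1 - c ^ 2) * ‖deriv T s‖ := by
        rw [← hnw, Real.sqrt_sq (norm_nonneg _)]

end helpers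

lemma cos_sum_ineq {σ α : ℝ} (hσ0 : 0 ≤ σ) (hσ : σ < Real.pi) (hα0 : 0 ≤ α) (hασ : α ≤ σ) :
    1 + Real.cos σ ≤ Real.cos α + Real.cos (σ - α) := by
  have hX : Real.cos α + Real.cos (σ - α) = 2 * Real.cos (σ/2) * Real.cos (α - σ/2) := by
    have h1 := Real.cos_add (σ/2) (α - σ/2)
    have h2 := Real.cos_sub (σ/2) (α - σ/2)
    have e1 : σ/2 + (α - σ/2) = α := by ring
    have e2 : σ/2 - (α - σ/2) = σ - α := by ring
    rw [e1] at h1; rw [e2] at h2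
    rw [h1, h2]; ring
  have hY : 1 + Real.cos σ = 2 * Real.cos (σ/2) * Real.cos (σ/2) := by
    have h := Real.cos_two_mul (σ/2)
    have e : 2 * (σ/2) = σ := by ring
    rw [e] at h
    nlinarith [h]
  rw [hX, hY]
  have hpos : 0 < Real.cos (σ/2) :=
    Real.cos_pos_of_mem_Ioo ⟨by linarith [Real.pi_pos], by linarith⟩
  have hmono : Real.cos (σ/2) ≤ Real.cos (α - σ/2) := by
    rw [← Real.cos_abs (α - σ/2)]
    apply Real.cos_le_cos_of_nonneg_of_le_pi (abs_nonneg _) (by linarith)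
    rw [abs_le]; constructor <;> linarith
  nlinarith

section main

variable {E : Type*} [NormedAddCommGroup E] [InnerProductSpace ℝ E]

lemma sphere_arc_eps (T : ℝ → E) (hT : Differentiable ℝ T) (hT' : Continuous (deriv T))
    (hunit : ∀ s, ‖T s‖ = 1) {a b : ℝ} (hab : a ≤ b) {ε : ℝ} (hε : 0 < ε)
    (hπ : ε + (∫ s in a..b, ‖deriv T s‖) + ε * (b - a) < Real.pi) :
    Real.cos (ε + (∫ s in a..b, ‖deriv T s‖) + ε * (b - a)) ≤ ⟪T a, T b⟫ := by
  have hcont : Continuous fun s : ℝ => ‖deriv T s‖ := hT'.norm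
  have hint : ∀ u v : ℝ, IntervalIntegrable (fun s => ‖deriv T s‖) MeasureTheory.volume u v :=
    fun u v => hcont.intervalIntegrable u v
  set L : ℝ := ∫ s in a..b, ‖deriv T s‖ with hLdef
  set ℓ : ℝ → ℝ := fun s => ∫ t in a..s, ‖deriv T t‖ with hℓdef
  have hℓd : ∀ s : ℝ, HasDerivAt ℓ ‖deriv T s‖ s := fun s =>
    intervalIntegral.integral_hasDerivAt_right (hint a s)
      (hcont.stronglyMeasurableAtFilter _ _) hcont.continuousAt
  set θ : ℝ → ℝ := fun s => ε + ℓ s + ε * (s - a) with hθdef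
  set f : ℝ → ℝ := fun s => ⟪T a, T s⟫ with hfdef
  set G : ℝ → ℝ := fun s => f s - Real.cos (θ s) with hGdef
  have hθd : ∀ s : ℝ, HasDerivAt θ (‖deriv T s‖ + ε) s := by
    intro s
    have h1 : HasDerivAt (fun s : ℝ => ε * (s - a)) ε s := by
      simpa using ((hasDerivAt_id s).sub_const a).const_mul ε
    exact ((hℓd s).const_add ε).add h1
  have hfd : ∀ s : ℝ, HasDerivAt f ⟪T a, deriv T s⟫ s := by
    intro s
    have := HasDerivAt.inner ℝ (hasDerivAt_const s (T a)) (hT s).hasDerivAt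
    simpa using this
  have hGd : ∀ s : ℝ, HasDerivAt G
      (⟪T a, deriv T s⟫ + Real.sin (θ s) * (‖deriv T s‖ + ε)) s := by
    intro s
    have hc : HasDerivAt (fun s => Real.cos (θ s)) (-Real.sin (θ s) * (‖deriv T s‖ + ε)) s :=
      (Real.hasDerivAt_cos (θ s)).comp s (hθd s)
    have := (hfd s).sub hc
    have e : ⟪T a, deriv T s⟫ + Real.sin (θ s) * (‖deriv T s‖ + ε)
        = ⟪T a, deriv T s⟫ - -Real.sin (θ s) * (‖deriv T s‖ + ε) := by ring
    rw [e]; exact this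
  have hGc : Continuous G := continuous_iff_continuousAt.2 fun s => (hGd s).differentiableAt.continuousAt
  have hℓ0 : ∀ s ∈ Set.Icc a b, 0 ≤ ℓ s := fun s hs =>
    intervalIntegral.integral_nonneg hs.1 fun u _ => norm_nonneg _
  have hℓL : ∀ s ∈ Set.Icc a b, ℓ s ≤ L := by
    intro s hs
    have h1 : ℓ s + ∫ t in s..b, ‖deriv T t‖ = L :=
      intervalIntegral.integral_add_adjacent_intervals (hint a s) (hint s b)
    have h2 : 0 ≤ ∫ t in s..b, ‖deriv T t‖ :=
      intervalIntegral.integral_nonneg hs.2 fun u _ => norm_nonneg _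
    linarith
  have hL0 : 0 ≤ L := intervalIntegral.integral_nonneg hab fun u _ => norm_nonneg _
  have hθ1 : ∀ s ∈ Set.Icc a b, 0 < θ s := by
    intro s hs
    have := hℓ0 s hs
    have h2 : 0 ≤ ε * (s - a) := mul_nonneg hε.le (by linarith [hs.1])
    simp only [hθdef]
    linarith
  have hθ2 : ∀ s ∈ Set.Icc a b, θ s < Real.pi := by
    intro s hs
    have h1 := hℓL s hs
    have h2 : ε * (s - a) ≤ ε * (b - a) := by
      apply mul_le_mul_of_nonneg_left _ hε.le
      linarith [hs.2]
    simp only [hθdef]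
    linarith
  have key : ∀ s ∈ Set.Icc a b, 0 ≤ G s := by
    by_contra hcon
    push_neg at hcon
    obtain ⟨s₀, hs₀, hGs₀⟩ := hcon
    set Z : Set ℝ := Set.Icc a b ∩ {s | G s ≤ 0} with hZdef
    have hZne : Z.Nonempty := ⟨s₀, hs₀, hGs₀.le⟩
    have hZbdd : BddBelow Z := ⟨a, fun z hz => hz.1.1⟩
    have hZcl : IsClosed Z := isClosed_Icc.inter (isClosed_le hGc continuous_const)
    set c : ℝ := sInf Z with hcdef
    have hcZ : c ∈ Z := hZcl.csInf_mem hZne hZbdd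
    have hGa : 0 < G a := by
      have h1 : ℓ a = 0 := intervalIntegral.integral_same
      have h2 : f a = 1 := by
        simp only [hfdef, real_inner_self_eq_norm_sq, hunit a]
        norm_num
      have h3 : G a = 1 - Real.cos ε := by
        simp only [hGdef, hθdef, h1, h2]
        norm_num
      have hεπ : ε < Real.pi := by
        have : 0 ≤ ε * (b - a) := mul_nonneg hε.le (by linarith)
        linarith
      have h4 : Real.cos ε < Real.cos 0 :=
        Real.cos_lt_cos_of_nonneg_of_le_pi le_rfl hεπ.le hε
      rw [Real.cos_zero] at h4
      linarith
    have hca : a < c := by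
      rcases lt_or_eq_of_le hcZ.1.1 with h | h
      · exact h
      · exact absurd hcZ.2 (by rw [← h]; exact not_le.2 hGa)
    have hGpos : ∀ t ∈ Set.Ico a c, 0 < G t := by
      intro t ht
      by_contra h
      push_neg at h
      have htZ : t ∈ Z := ⟨⟨ht.1, le_trans ht.2.le hcZ.1.2⟩, h⟩
      exact absurd (csInf_le hZbdd htZ) (not_le.2 ht.2)
    have hGc0 : G c = 0 := by
      refine le_antisymm hcZ.2 ?_
      have htend : Filter.Tendsto G (nhdsWithin c (Set.Iio c)) (nhds (G c)) :=
        (hGc.continuousAt).continuousWithinAt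
      refine ge_of_tendsto htend ?_
      filter_upwards [Ioo_mem_nhdsLT_of_mem (Set.mem_Ioc.2 ⟨hca, le_refl c⟩)] with t ht
      exact (hGpos t ⟨ht.1.le, ht.2⟩).le
    have hsin : 0 < Real.sin (θ c) :=
      Real.sin_pos_of_pos_of_lt_pi (hθ1 c hcZ.1) (hθ2 c hcZ.1)
    have hfc : Real.cos (θ c) = f c := by
      have : f c - Real.cos (θ c) = 0 := hGc0
      linarith
    have hder_lb : -(Real.sin (θ c) * ‖deriv T c‖) ≤ ⟪T a, deriv T c⟫ := by
      have h2 := abs_inner_deriv_le T hT hunit (T a) (hunit a) c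
      have h3 : 1 - ⟪T a, T c⟫ ^ 2 = Real.sin (θ c) ^ 2 := by
        have h4 := Real.sin_sq_add_cos_sq (θ c)
        have h5 : ⟪T a, T c⟫ = Real.cos (θ c) := hfc.symm
        rw [h5]; linarith
      rw [h3, Real.sqrt_sq hsin.le] at h2
      have h6 := (abs_le.mp h2).1
      linarith
    have hD : 0 < ⟪T a, deriv T c⟫ + Real.sin (θ c) * (‖deriv T c‖ + ε) := by
      have hexp : Real.sin (θ c) * (‖deriv T c‖ + ε)
          = Real.sin (θ c) * ‖deriv T c‖ + Real.sin (θ c) * ε := by ring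
      have h7 : 0 < Real.sin (θ c) * ε := mul_pos hsin hε
      linarith
    have hslope := hasDerivAt_iff_tendsto_slope.mp (hGd c)
    have hslope' : Filter.Tendsto (slope G c) (nhdsWithin c (Set.Iio c))
        (nhds (⟪T a, deriv T c⟫ + Real.sin (θ c) * (‖deriv T c‖ + ε))) := by
      refine hslope.mono_left (nhdsWithin_mono c ?_)
      intro x hx
      exact ne_of_lt hx
    have hne : (nhdsWithin c (Set.Iio c)).NeBot := nhdsWithin_Iio_self_neBot' ⟨a, hca⟩
    have hle : ⟪T a, deriv T c⟫ + Real.sin (θ c) * (‖deriv T c‖ + ε) ≤ 0 := by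
      refine le_of_tendsto hslope' ?_
      filter_upwards [Ioo_mem_nhdsLT_of_mem (Set.mem_Ioc.2 ⟨hca, le_refl c⟩)] with t ht
      have h8 : 0 < G t := hGpos t ⟨ht.1.le, ht.2⟩
      have h9 : t - c < 0 := by linarith [ht.2]
      rw [slope_def_field]
      rw [hGc0]
      exact le_of_lt (div_neg_of_pos_of_neg (by linarith) (by linarith)) |>.trans (le_refl 0)
    linarith
  have hbmem : b ∈ Set.Icc a b := ⟨hab, le_refl b⟩
  have := key b hbmem
  have hθb : θ b = ε + L + ε * (b - a) := by
    simp only [hθdef, hℓdef, hLdef]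
  rw [hGdef] at this
  simp only at this
  rw [hθb] at this
  linarith
lemma sphere_arc (T : ℝ → E) (hT : Differentiable ℝ T) (hT' : Continuous (deriv T))
    (hunit : ∀ s, ‖T s‖ = 1) {a b : ℝ} (hab : a ≤ b)
    (hπ : (∫ s in a..b, ‖deriv T s‖) ≤ Real.pi) :
    Real.cos (∫ s in a..b, ‖deriv T s‖) ≤ ⟪T a, T b⟫ := by
  set L : ℝ := ∫ s in a..b, ‖deriv T s‖ with hL
  rcases lt_or_eq_of_le hπ with hlt | heq
  · set ε₀ : ℝ := (Real.pi - L) / (1 + (b - a)) with hε₀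
    have hba : 0 ≤ b - a := by linarith
    have hden : 0 < 1 + (b - a) := by linarith
    have hε₀pos : 0 < ε₀ := div_pos (by linarith) hden
    have hev : ∀ ε ∈ Set.Ioo (0:ℝ) ε₀, Real.cos (ε + L + ε * (b - a)) ≤ ⟪T a, T b⟫ := by
      intro ε hε
      apply sphere_arc_eps T hT hT' hunit hab hε.1
      have h1 : ε * (1 + (b - a)) < ε₀ * (1 + (b - a)) :=
        mul_lt_mul_of_pos_right hε.2 hden
      have h2 : ε₀ * (1 + (b - a)) = Real.pi - L := div_mul_cancel₀ _ (ne_of_gt hden)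
      nlinarith
    have htend : Filter.Tendsto (fun ε : ℝ => Real.cos (ε + L + ε * (b - a)))
        (nhdsWithin 0 (Set.Ioi 0)) (nhds (Real.cos L)) := by
      have hc : Continuous fun ε : ℝ => Real.cos (ε + L + ε * (b - a)) := by
        apply Real.continuous_cos.comp
        continuity
      have h0 : Real.cos (0 + L + 0 * (b - a)) = Real.cos L := by norm_num
      have h3 := hc.tendsto 0
      rw [h0] at h3
      exact h3.mono_left nhdsWithin_le_nhds
    refine le_of_tendsto htend ?_
    filter_upwards [Ioo_mem_nhdsGT_of_mem (Set.mem_Ico.2 ⟨le_refl (0:ℝ), hε₀pos⟩)] with ε hε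
    exact hev ε hε
  · have h1 := abs_real_inner_le_norm (T a) (T b)
    rw [hunit a, hunit b] at h1
    norm_num at h1
    rw [heq, Real.cos_pi]
    linarith [(abs_le.mp h1).1]

end main

/-- **Fenchel's theorem.** A smooth closed curve in `ℝⁿ`
parametrized by arc length on `[0,1]` (with matching endpoints and
derivatives) has total curvature `∫₀¹ |γ''(s)| ds ≥ 2π`. -/
theorem stmt5 {n : ℕ} (γ : ℝ → EuclideanSpace ℝ (Fin n))
    (hγ : ContDiff ℝ (⊤ : ℕ∞) γ)
    (harc : ∀ s : ℝ, ‖deriv γ s‖ = 1)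
    (hclosed : γ 0 = γ 1)
    (hclosed' : deriv γ 0 = deriv γ 1) :
    2 * Real.pi ≤ ∫ s in (0:ℝ)..1, ‖deriv (deriv γ) s‖ := by
  by_contra hcon
  push_neg at hcon
  obtain ⟨hγdiff, hTsm⟩ := contDiff_infty_iff_deriv.mp (hγ.of_le (by simp))
  obtain ⟨hTdiff, hT'sm⟩ := contDiff_infty_iff_deriv.mp hTsm
  set T : ℝ → EuclideanSpace ℝ (Fin n) := deriv γ with hTdef
  have hT'cont : Continuous (deriv T) := hT'sm.continuous
  have hcont : Continuous fun s : ℝ => ‖deriv T s‖ := hT'cont.norm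
  have hint : ∀ u v : ℝ, IntervalIntegrable (fun s => ‖deriv T s‖) MeasureTheory.volume u v :=
    fun u v => hcont.intervalIntegrable u v
  set K : ℝ := ∫ s in (0:ℝ)..1, ‖deriv T s‖ with hKdef
  set ℓ : ℝ → ℝ := fun s => ∫ t in (0:ℝ)..s, ‖deriv T t‖ with hℓdef
  have hℓd : ∀ s : ℝ, HasDerivAt ℓ ‖deriv T s‖ s := fun s =>
    intervalIntegral.integral_hasDerivAt_right (hint 0 s)
      (hcont.stronglyMeasurableAtFilter _ _) hcont.continuousAt
  have hℓcont : Continuous ℓ :=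
    continuous_iff_continuousAt.2 fun s => (hℓd s).differentiableAt.continuousAt
  have harc_eq : ∀ u v : ℝ, (∫ s in u..v, ‖deriv T s‖) = ℓ v - ℓ u := by
    intro u v
    have h := intervalIntegral.integral_add_adjacent_intervals (hint 0 u) (hint u v)
    simp only [hℓdef]
    linarith
  have hmono : ∀ u v : ℝ, u ≤ v → ℓ u ≤ ℓ v := by
    intro u v huv
    have h0 : 0 ≤ ∫ s in u..v, ‖deriv T s‖ :=
      intervalIntegral.integral_nonneg huv fun t _ => norm_nonneg _
    have := harc_eq u v
    linarith
  have hℓ0 : ℓ 0 = 0 := intervalIntegral.integral_same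
  have hℓ1 : ℓ 1 = K := rfl
  have hK0 : 0 ≤ K := by
    have := hmono 0 1 (by norm_num)
    rw [hℓ0] at this; rw [← hℓ1]; linarith
  have hKπ : K / 2 < Real.pi := by
    rw [hKdef]
    simp only [hTdef]
    linarith [hcon]
  have hIVT : ∃ x ∈ Set.Icc (0:ℝ) 1, ℓ x = K / 2 := by
    have h := intermediate_value_Icc (by norm_num : (0:ℝ) ≤ 1) hℓcont.continuousOn
    have hmem : K / 2 ∈ Set.Icc (ℓ 0) (ℓ 1) := by
      rw [hℓ0, hℓ1]
      constructor <;> linarith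
    exact h hmem
  obtain ⟨x, hx, hℓx⟩ := hIVT
  have hT10 : T 0 = T 1 := hclosed'
  -- key pointwise bound
  have hlow : ∀ s ∈ Set.Icc (0:ℝ) 1,
      1 + Real.cos (K / 2) ≤ ⟪T 0 + T x, T s⟫ := by
    intro s hs
    rcases le_total s x with hsx | hxs
    · have hα0 : 0 ≤ ℓ s := by have := hmono 0 s hs.1; rw [hℓ0] at this; linarith
      have hασ : ℓ s ≤ K / 2 := by have := hmono s x hsx; linarith
      have h1 : Real.cos (ℓ s) ≤ ⟪T 0, T s⟫ := by
        have h := sphere_arc T hTdiff hT'cont harc hs.1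
          (by rw [harc_eq, hℓ0]; linarith)
        rwa [harc_eq, hℓ0, sub_zero] at h
      have h2 : Real.cos (K / 2 - ℓ s) ≤ ⟪T s, T x⟫ := by
        have h := sphere_arc T hTdiff hT'cont harc hsx
          (by rw [harc_eq, hℓx]; linarith)
        rwa [harc_eq, hℓx] at h
      have h3 := cos_sum_ineq (by linarith : (0:ℝ) ≤ K / 2) hKπ hα0 hασ
      rw [inner_add_left]
      have h4 : ⟪T x, T s⟫ = ⟪T s, T x⟫ := real_inner_comm _ _
      linarith
    · have hxK : K / 2 ≤ ℓ s := by have := hmono x s hxs; linarith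
      have hsK : ℓ s ≤ K := by have := hmono s 1 hs.2; rw [hℓ1] at this; linarith
      have hα0 : 0 ≤ ℓ s - K / 2 := by linarith
      have hασ : ℓ s - K / 2 ≤ K / 2 := by linarith
      have h1 : Real.cos (ℓ s - K / 2) ≤ ⟪T x, T s⟫ := by
        have h := sphere_arc T hTdiff hT'cont harc hxs
          (by rw [harc_eq, hℓx]; linarith)
        rwa [harc_eq, hℓx] at h
      have h2 : Real.cos (K - ℓ s) ≤ ⟪T s, T 1⟫ := by
        have h := sphere_arc T hTdiff hT'cont harc hs.2
          (by rw [harc_eq, hℓ1]; linarith)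
        rwa [harc_eq, hℓ1] at h
      have h3 := cos_sum_ineq (by linarith : (0:ℝ) ≤ K / 2) hKπ hα0 hασ
      have e : K / 2 - (ℓ s - K / 2) = K - ℓ s := by ring
      rw [e] at h3
      rw [inner_add_left]
      have h4 : ⟪T 0, T s⟫ = ⟪T s, T 1⟫ := by
        rw [real_inner_comm, hT10]
      have h5 : ⟪T x, T s⟫ = ⟪T s, T x⟫ := real_inner_comm _ _
      have h1' : Real.cos (ℓ s - K / 2) ≤ ⟪T s, T x⟫ := by rw [← h5]; exact h1
      linarith
  have hδpos : 0 < 1 + Real.cos (K / 2) := by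
    have h := Real.cos_lt_cos_of_nonneg_of_le_pi (by linarith : (0:ℝ) ≤ K / 2) le_rfl hKπ
    rw [Real.cos_pi] at h
    linarith
  have hTcont : Continuous T := hTdiff.continuous
  have hic : Continuous fun s : ℝ => ⟪T 0 + T x, T s⟫ := continuous_const.inner hTcont
  have hmono_int := intervalIntegral.integral_mono_on (by norm_num : (0:ℝ) ≤ 1)
      (intervalIntegrable_const : IntervalIntegrable (fun _ : ℝ => 1 + Real.cos (K / 2)) MeasureTheory.volume 0 1) (hic.intervalIntegrable 0 1) hlow
  rw [intervalIntegral.integral_const] at hmono_int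
  simp only [sub_zero, one_smul] at hmono_int
  have hTint : IntervalIntegrable T MeasureTheory.volume 0 1 := hTcont.intervalIntegrable 0 1
  have hFTC : (∫ s in (0:ℝ)..1, T s) = γ 1 - γ 0 :=
    intervalIntegral.integral_deriv_eq_sub (fun s _ => hγdiff s) hTint
  have hzero : (∫ s in (0:ℝ)..1, ⟪T 0 + T x, T s⟫) = 0 := by
    have h := (innerSL ℝ (T 0 + T x)).intervalIntegral_comp_comm hTint
    simp only [innerSL_apply_apply] at h
    rw [h, hFTC, hclosed]
    simp
  rw [hzero] at hmono_int
  linarith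
end

section
/- Let E_Q^* ⊆ C(Q) be measurable subsets indexed by dyadic cubes Q, arising from a stopping-time decomposition: for each cube Q there is a disjoint family {Q_k} of dyadic subcubes of Q with μ(Q ∖ ∪_k Q_k) > τ μ(Q) for a fixed τ ∈ (0,1), and E_Q^* := C(Q) ∖ ∪_k C(Q_k). Suppose there is c > 0 such that ∫∫_{E_Q^*} dν ≤ c μ(Q) for every cube Q (where ν is a positive measure on X × (0, t₀]). Then ν satisfies the Carleson condition on these cubes: ∫∫_{C(Q)} dν ≤ (c/τ) μ(Q). -/
open MeasureTheory Set ENNReal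

private def gen {ι : Type} (bad : ι → Set ι) (i0 : ι) : ℕ → Set ι
  | 0 => {i0}
  | n + 1 => ⋃ i ∈ gen bad i0 n, bad i

/-- **stopping-time Carleson iteration.** Suppose each dyadic cube
`Q` (with carrier `S Q` and side length `l Q`) admits a disjoint family
`bad Q` of strictly smaller subcubes with `μ(Q ∖ ∪ bad Q) > τ μ(Q)`, and that
the measure `ν` satisfies the sawtooth bound `ν(E_Q^*) ≤ c μ(Q)` where
`E_Q^* = C(Q) ∖ ∪_{Q' ∈ bad Q} C(Q')` and `C(Q) = S Q × (0, l Q]`.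
Then `ν(C(Q)) ≤ (c/τ) μ(Q)` for every cube `Q`. -/
theorem stmt16 {X : Type*} [MetricSpace X] [MeasurableSpace X]
    (μ : Measure X) (ν : Measure (X × ℝ))
    (ι : Type) (hcount : Countable ι)
    (S : ι → Set X) (l : ι → ℝ) (bad : ι → Set ι)
    (τ c δ : ℝ) (hτ : τ ∈ Set.Ioo (0:ℝ) 1) (hc : 0 ≤ c) (hδ : δ ∈ Set.Ioo (0:ℝ) 1)
    (hmeas : ∀ i, MeasurableSet (S i))
    (hfin : ∀ i, μ (S i) < ∞)
    (hlpos : ∀ i, 0 < l i)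
    -- bad subcubes are strictly smaller subcubes:
    (hsub : ∀ i, ∀ j ∈ bad i, S j ⊆ S i ∧ l j ≤ δ * l i)
    -- bad subcubes of a given cube are pairwise disjoint:
    (hdisj : ∀ i, ∀ j ∈ bad i, ∀ k ∈ bad i, j ≠ k → Disjoint (S j) (S k))
    -- the good part retains a fixed proportion of the measure:
    (hgood : ∀ i, ENNReal.ofReal τ * μ (S i) < μ (S i \ ⋃ j ∈ bad i, S j))
    -- sawtooth Carleson bound:
    (hsaw : ∀ i,
      ν ((S i ×ˢ Ioc (0:ℝ) (l i)) \ ⋃ j ∈ bad i, S j ×ˢ Ioc (0:ℝ) (l j))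
        ≤ ENNReal.ofReal c * μ (S i)) :
    ∀ i, ν (S i ×ˢ Ioc (0:ℝ) (l i)) ≤ ENNReal.ofReal (c / τ) * μ (S i) := by
  classical
  have := hcount
  intro i0
  obtain ⟨hτ0, hτ1⟩ := hτ
  obtain ⟨hδ0, hδ1⟩ := hδ
  set G : ℕ → Set ι := gen bad i0 with hG
  set r : ℝ≥0∞ := ENNReal.ofReal (1 - τ) with hr
  -- measure of bad union
  have hbadμ : ∀ i, ∑' j : bad i, μ (S j) ≤ r * μ (S i) := by
    intro i
    have hpd : (bad i).PairwiseDisjoint S := fun j hj k hk hjk => hdisj i j hj k hk hjk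
    have hUeq : μ (⋃ j ∈ bad i, S j) = ∑' j : bad i, μ (S j) :=
      measure_biUnion (to_countable _) hpd (fun j _ => hmeas j)
    rw [← hUeq]
    set U := ⋃ j ∈ bad i, S j with hU
    have hUsub : U ⊆ S i := by
      intro x hx
      simp only [hU, mem_iUnion] at hx
      obtain ⟨j, hj, hxj⟩ := hx
      exact (hsub i j hj).1 hxj
    have hUm : MeasurableSet U := MeasurableSet.biUnion (to_countable _) (fun j _ => hmeas j)
    have hsplit : μ (S i \ U) + μ U = μ (S i) := by
      have h := measure_diff_add_inter (S i) hUm (μ := μ)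
      rwa [inter_eq_self_of_subset_right hUsub] at h
    have hlt : ENNReal.ofReal τ * μ (S i) < μ (S i \ U) := hgood i
    have hfinU : μ U < ∞ := lt_of_le_of_lt (measure_mono hUsub) (hfin i)
    -- r * μ(S i) + ofReal τ * μ(S i) = μ(S i)
    have hsum : r * μ (S i) + ENNReal.ofReal τ * μ (S i) = μ (S i) := by
      rw [← add_mul, hr, ← ENNReal.ofReal_add (by linarith) hτ0.le]
      norm_num
    by_contra hcon
    push_neg at hcon
    have : μ (S i) < μ (S i) := by
      calc μ (S i) = r * μ (S i) + ENNReal.ofReal τ * μ (S i) := hsum.symm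
        _ < μ U + μ (S i \ U) := ENNReal.add_lt_add hcon hlt
        _ = μ (S i) := by rw [add_comm]; exact hsplit
    exact absurd this (lt_irrefl _)
  -- generation measure bound
  have hgen : ∀ n, ∑' i : G n, μ (S i) ≤ r ^ n * μ (S i0) := by
    intro n
    induction n with
    | zero =>
      rw [show G 0 = {i0} from rfl]
      calc ∑' i : ({i0} : Set ι), μ (S i) = μ (S i0) := tsum_singleton i0 (fun i => μ (S i))
        _ ≤ r ^ 0 * μ (S i0) := by rw [pow_zero, one_mul]
    | succ n ih =>
      have h1 : ∑' j : G (n+1), μ (S j) ≤ ∑' i : G n, ∑' j : bad i, μ (S j) :=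
        ENNReal.tsum_biUnion_le_tsum (fun j => μ (S j)) (G n) bad
      have h2 : ∑' i : G n, ∑' j : bad i, μ (S j) ≤ ∑' i : G n, r * μ (S (i : ι)) :=
        ENNReal.tsum_le_tsum (fun i => hbadμ i)
      calc ∑' j : G (n+1), μ (S j) ≤ ∑' i : G n, r * μ (S (i : ι)) := h1.trans h2
        _ = r * ∑' i : G n, μ (S (i : ι)) := ENNReal.tsum_mul_left
        _ ≤ r * (r ^ n * μ (S i0)) := mul_le_mul_right ih _
        _ = r ^ (n+1) * μ (S i0) := by ring
  -- side length bound in generation n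
  have hlen : ∀ n, ∀ i ∈ G n, l i ≤ δ ^ n * l i0 := by
    intro n
    induction n with
    | zero => intro i hi; simp only [hG, gen, mem_singleton_iff] at hi; simp [hi]
    | succ n ih =>
      intro j hj
      simp only [hG, gen, mem_iUnion] at hj
      obtain ⟨i, hi, hji⟩ := hj
      have := (hsub i j hji).2
      have h2 := ih i hi
      calc l j ≤ δ * l i := this
        _ ≤ δ * (δ ^ n * l i0) := by nlinarith
        _ = δ ^ (n+1) * l i0 := by ring
  -- coverage
  have hcover : S i0 ×ˢ Ioc (0:ℝ) (l i0) ⊆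
      ⋃ n, ⋃ i ∈ G n, ((S i ×ˢ Ioc (0:ℝ) (l i)) \ ⋃ j ∈ bad i, S j ×ˢ Ioc (0:ℝ) (l j)) := by
    rintro ⟨x, t⟩ hxt
    simp only [mem_prod, mem_Ioc] at hxt
    obtain ⟨hx, ht0, htl⟩ := hxt
    set P : ℕ → Prop := fun n => ∃ i ∈ G n, (x, t) ∈ S i ×ˢ Ioc (0:ℝ) (l i) with hP
    have hP0 : P 0 := by
      rw [hP]
      exact ⟨i0, Set.mem_singleton i0, mem_prod.mpr ⟨hx, mem_Ioc.mpr ⟨ht0, htl⟩⟩⟩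
    have hPnot : ∃ n, ¬ P n := by
      obtain ⟨n, hn⟩ := exists_pow_lt_of_lt_one (mul_pos ht0 (inv_pos.mpr (hlpos i0))) hδ1
      refine ⟨n, ?_⟩
      rintro ⟨i, hi, hmem⟩
      have h1 : t ≤ l i := by
        have hm := hmem
        simp only [mem_prod, mem_Ioc] at hm
        exact hm.2.2
      have h2 := hlen n i hi
      have : δ ^ n * l i0 < t := by
        have := (mul_lt_mul_iff_left₀ (hlpos i0)).mpr hn
        rw [mul_assoc, inv_mul_cancel₀ (hlpos i0).ne', mul_one] at this
        exact this
      linarith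
    have hex : ∃ n, ¬ P n := hPnot
    set N := Nat.find hex with hN
    have hNnot : ¬ P N := Nat.find_spec hex
    have hNpos : 0 < N := by
      rcases Nat.eq_zero_or_pos N with h | h
      · exact absurd (h ▸ hNnot) (not_not_intro hP0)
      · exact h
    have hPm : P (N - 1) := not_not.mp (Nat.find_min hex (by omega))
    obtain ⟨i, hi, hmem⟩ := hPm
    refine mem_iUnion.mpr ⟨N - 1, mem_iUnion₂.mpr ⟨i, hi, hmem, ?_⟩⟩
    intro hbad
    simp only [mem_iUnion] at hbad
    obtain ⟨j, hj, hmemj⟩ := hbad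
    apply hNnot
    refine ⟨j, ?_, hmemj⟩
    have : N - 1 + 1 = N := by omega
    rw [← this]
    simp only [hG, gen, mem_iUnion]
    exact ⟨i, hi, hj⟩
  -- final computation
  have hGc : ∀ n, (G n).Countable := fun n => to_countable _
  calc ν (S i0 ×ˢ Ioc (0:ℝ) (l i0))
      ≤ ν (⋃ n, ⋃ i ∈ G n, ((S i ×ˢ Ioc (0:ℝ) (l i)) \ ⋃ j ∈ bad i, S j ×ˢ Ioc (0:ℝ) (l j))) :=
        measure_mono hcover
    _ ≤ ∑' n, ν (⋃ i ∈ G n, ((S i ×ˢ Ioc (0:ℝ) (l i)) \ ⋃ j ∈ bad i, S j ×ˢ Ioc (0:ℝ) (l j))) :=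
        measure_iUnion_le _
    _ ≤ ∑' n, ∑' i : G n, ν ((S (i:ι) ×ˢ Ioc (0:ℝ) (l (i:ι))) \ ⋃ j ∈ bad (i:ι), S j ×ˢ Ioc (0:ℝ) (l j)) :=
        ENNReal.tsum_le_tsum (fun n => measure_biUnion_le ν (hGc n) _)
    _ ≤ ∑' n, ∑' i : G n, ENNReal.ofReal c * μ (S (i:ι)) :=
        ENNReal.tsum_le_tsum (fun n => ENNReal.tsum_le_tsum (fun i => hsaw i))
    _ = ∑' n, ENNReal.ofReal c * ∑' i : G n, μ (S (i:ι)) := by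
        exact tsum_congr (fun n => ENNReal.tsum_mul_left)
    _ ≤ ∑' n, ENNReal.ofReal c * (r ^ n * μ (S i0)) :=
        ENNReal.tsum_le_tsum (fun n => mul_le_mul_right (hgen n) _)
    _ = ENNReal.ofReal c * ((∑' n, r ^ n) * μ (S i0)) := by
        rw [ENNReal.tsum_mul_left, ENNReal.tsum_mul_right]
    _ ≤ ENNReal.ofReal (c / τ) * μ (S i0) := by
        have hrsum : (∑' n : ℕ, r ^ n) = (ENNReal.ofReal τ)⁻¹ := by
          rw [ENNReal.tsum_geometric]
          congr 1
          rw [hr, ← ENNReal.ofReal_one, ← ENNReal.ofReal_sub _ (by linarith)]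
          norm_num
        rw [hrsum, ENNReal.ofReal_div_of_pos hτ0, div_eq_mul_inv, mul_assoc]
end

section
/- Let M be a complete Riemannian submanifold of ℝⁿ via an isometric embedding ι, with second fundamental form h. For every smooth compactly supported function v on M and every point x ∈ M (working in geodesic normal coordinates at x): Σ_{α=1}^n |∇(grad v (ι^α))|²_{T_x^*M} ≤ |∇²v|²_{T_x^*M ⊗ T_x^*M} + |h(x)|² |∇v|²_{T_x^*M}, where ι^α are the components of the embedding, ∇² is the Hessian, and grad v(ι^α) denotes the derivative of ι^α in the direction grad v. -/
/-- Partial derivative in the `i`-th coordinate direction. -/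
noncomputable def pdv {m : ℕ} (f : EuclideanSpace ℝ (Fin m) → ℝ) (i : Fin m)
    (x : EuclideanSpace ℝ (Fin m)) : ℝ :=
  fderiv ℝ f x (EuclideanSpace.single i 1)

/-- The induced metric `g_{ij} = ∂_i ι^α ∂_j ι^α` of an embedding `ι : M → ℝⁿ`
in a local chart. -/
noncomputable def met {m n : ℕ} (ι : EuclideanSpace ℝ (Fin m) → EuclideanSpace ℝ (Fin n))
    (i j : Fin m) (y : EuclideanSpace ℝ (Fin m)) : ℝ :=
  ∑ α, pdv (fun z => ι z α) i y * pdv (fun z => ι z α) j y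

lemma pdv_contDiff {m : ℕ} {f : EuclideanSpace ℝ (Fin m) → ℝ}
    (hf : ContDiff ℝ (⊤ : ℕ∞) f) (i : Fin m) : ContDiff ℝ (⊤ : ℕ∞) (fun y => pdv f i y) :=
  (hf.fderiv_right (by simp)).clm_apply contDiff_const

lemma pdv_mul {m : ℕ} {f g : EuclideanSpace ℝ (Fin m) → ℝ} {x : EuclideanSpace ℝ (Fin m)}
    (hf : DifferentiableAt ℝ f x) (hg : DifferentiableAt ℝ g x) (i : Fin m) :
    pdv (fun y => f y * g y) i x = pdv f i x * g x + f x * pdv g i x := by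
  unfold pdv
  rw [fderiv_fun_mul hf hg]
  simp
  ring

lemma pdv_sum {m : ℕ} {κ : Type*} (s : Finset κ) {f : κ → EuclideanSpace ℝ (Fin m) → ℝ}
    {x : EuclideanSpace ℝ (Fin m)}
    (hf : ∀ a ∈ s, DifferentiableAt ℝ (f a) x) (i : Fin m) :
    pdv (fun y => ∑ a ∈ s, f a y) i x = ∑ a ∈ s, pdv (f a) i x := by
  unfold pdv
  rw [fderiv_fun_sum hf]
  simp

lemma pdv_pdv_symm {m : ℕ} {f : EuclideanSpace ℝ (Fin m) → ℝ} (hf : ContDiff ℝ (⊤ : ℕ∞) f)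
    (i k : Fin m) (x : EuclideanSpace ℝ (Fin m)) :
    pdv (fun y => pdv f k y) i x = pdv (fun y => pdv f i y) k x := by
  have hd : ∀ y, HasFDerivAt f (fderiv ℝ f y) y := fun y =>
    (hf.differentiable (by simp) y).hasFDerivAt
  have hd2 : HasFDerivAt (fderiv ℝ f) (fderiv ℝ (fderiv ℝ f) x) x :=
    ((hf.fderiv_right (m := (⊤ : ℕ∞)) (by simp)).differentiable (by simp) x).hasFDerivAt
  have hsymm := second_derivative_symmetric hd hd2
    (EuclideanSpace.single i 1) (EuclideanSpace.single k 1)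
  have key : ∀ a b : Fin m, pdv (fun y => pdv f a y) b x
      = fderiv ℝ (fderiv ℝ f) x (EuclideanSpace.single b 1) (EuclideanSpace.single a 1) := by
    intro a b
    unfold pdv
    rw [fderiv_clm_apply ((hf.fderiv_right (m := (⊤ : ℕ∞)) (by simp)).differentiable (by simp) x)
      (differentiableAt_const _)]
    simp
  rw [key, key, hsymm]

lemma comp_contDiff {m n : ℕ} {ι : EuclideanSpace ℝ (Fin m) → EuclideanSpace ℝ (Fin n)}
    (hι : ContDiff ℝ (⊤ : ℕ∞) ι) (α : Fin n) : ContDiff ℝ (⊤ : ℕ∞) (fun z => ι z α) := by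
  have := (EuclideanSpace.proj (𝕜 := ℝ) α).contDiff.comp hι
  exact this

lemma met_contDiff {m n : ℕ} {ι : EuclideanSpace ℝ (Fin m) → EuclideanSpace ℝ (Fin n)}
    (hι : ContDiff ℝ (⊤ : ℕ∞) ι) (i j : Fin m) : ContDiff ℝ (⊤ : ℕ∞) (fun y => met ι i j y) := by
  unfold met
  exact ContDiff.sum fun α _ =>
    (pdv_contDiff (comp_contDiff hι α) i).mul (pdv_contDiff (comp_contDiff hι α) j)


lemma stmt17_alg {m n : ℕ} (P : Fin n → Fin m → ℝ) (H : Fin n → Fin m → Fin m → ℝ)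
    (V : Fin m → ℝ) (W : Fin m → Fin m → ℝ)
    (hPorth : ∀ k l, (∑ α, P α k * P α l) = if k = l then (1:ℝ) else 0)
    (hA : ∀ i l k, (∑ α, H α i l * P α k) = 0) :
    (∑ α, ∑ i, (∑ k, (W i k * P α k + V k * H α i k)) ^ 2)
      ≤ (∑ i, ∑ j, (W i j) ^ 2) + (∑ i, ∑ l, ∑ α, (H α i l) ^ 2) * ∑ k, (V k) ^ 2 := by
  have expand : ∀ α i, (∑ k, (W i k * P α k + V k * H α i k)) ^ 2
      = (∑ k, W i k * P α k) ^ 2 + 2 * ((∑ k, W i k * P α k) * (∑ k, V k * H α i k))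
        + (∑ k, V k * H α i k) ^ 2 := by
    intro α i
    rw [Finset.sum_add_distrib]
    ring
  -- tangential part
  have hT : ∀ i, (∑ α, (∑ k, W i k * P α k) ^ 2) = ∑ k, (W i k) ^ 2 := by
    intro i
    have h1 : ∀ α, (∑ k, W i k * P α k) ^ 2
        = ∑ k, ∑ l, (W i k * W i l) * (P α k * P α l) := by
      intro α
      rw [sq, Finset.sum_mul_sum]
      exact Finset.sum_congr rfl fun k _ => Finset.sum_congr rfl fun l _ => by ring
    simp_rw [h1]
    rw [Finset.sum_comm]
    refine Finset.sum_congr rfl fun k _ => ?_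
    rw [Finset.sum_comm]
    calc (∑ l, ∑ α, W i k * W i l * (P α k * P α l))
        = ∑ l, W i k * W i l * ∑ α, P α k * P α l := by
          exact Finset.sum_congr rfl fun l _ => by rw [Finset.mul_sum]
      _ = ∑ l, W i k * W i l * (if k = l then (1:ℝ) else 0) := by
          exact Finset.sum_congr rfl fun l _ => by rw [hPorth]
      _ = W i k ^ 2 := by simp [mul_ite, sq]
  -- cross term
  have hTN : ∀ i, (∑ α, (∑ k, W i k * P α k) * (∑ l, V l * H α i l)) = 0 := by
    intro i
    have h1 : ∀ α, (∑ k, W i k * P α k) * (∑ l, V l * H α i l)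
        = ∑ k, ∑ l, (W i k * V l) * (H α i l * P α k) := by
      intro α
      rw [Finset.sum_mul_sum]
      exact Finset.sum_congr rfl fun k _ => Finset.sum_congr rfl fun l _ => by ring
    simp_rw [h1]
    rw [Finset.sum_comm]
    refine Finset.sum_eq_zero fun k _ => ?_
    rw [Finset.sum_comm]
    refine Finset.sum_eq_zero fun l _ => ?_
    rw [← Finset.mul_sum, hA, mul_zero]
  -- Cauchy-Schwarz for the normal part
  have hN : ∀ α i, (∑ k, V k * H α i k) ^ 2 ≤ (∑ l, (H α i l) ^ 2) * (∑ k, (V k) ^ 2) := by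
    intro α i
    have := Finset.sum_mul_sq_le_sq_mul_sq Finset.univ (fun k => H α i k) V
    calc (∑ k, V k * H α i k) ^ 2 = (∑ k, H α i k * V k) ^ 2 := by
          rw [Finset.sum_congr rfl fun k _ => mul_comm (V k) (H α i k)]
      _ ≤ _ := this
  calc (∑ α, ∑ i, (∑ k, (W i k * P α k + V k * H α i k)) ^ 2)
      = ∑ i, ∑ α, ((∑ k, W i k * P α k) ^ 2
          + 2 * ((∑ k, W i k * P α k) * (∑ k, V k * H α i k))
          + (∑ k, V k * H α i k) ^ 2) := by
        rw [Finset.sum_comm]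
        exact Finset.sum_congr rfl fun i _ => Finset.sum_congr rfl fun α _ => expand α i
    _ = ∑ i, ((∑ k, (W i k) ^ 2) + 2 * 0 + ∑ α, (∑ k, V k * H α i k) ^ 2) := by
        refine Finset.sum_congr rfl fun i _ => ?_
        rw [Finset.sum_add_distrib, Finset.sum_add_distrib, hT i, ← Finset.mul_sum, hTN i]
    _ ≤ ∑ i, ((∑ k, (W i k) ^ 2) + ∑ α, (∑ l, (H α i l) ^ 2) * (∑ k, (V k) ^ 2)) := by
        refine Finset.sum_le_sum fun i _ => ?_
        simp only [mul_zero, add_zero]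
        exact add_le_add le_rfl (Finset.sum_le_sum fun α _ => hN α i)
    _ = (∑ i, ∑ j, (W i j) ^ 2) + (∑ i, ∑ l, ∑ α, (H α i l) ^ 2) * ∑ k, (V k) ^ 2 := by
        rw [Finset.sum_add_distrib]
        congr 1
        calc ∑ i, ∑ α, (∑ l, (H α i l) ^ 2) * (∑ k, (V k) ^ 2)
            = ∑ i, (∑ α, ∑ l, (H α i l) ^ 2) * (∑ k, (V k) ^ 2) :=
              Finset.sum_congr rfl fun i _ => (Finset.sum_mul _ _ _).symm
          _ = (∑ i, ∑ α, ∑ l, (H α i l) ^ 2) * (∑ k, (V k) ^ 2) := (Finset.sum_mul _ _ _).symm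
          _ = (∑ i, ∑ l, ∑ α, (H α i l) ^ 2) * (∑ k, (V k) ^ 2) := by
              congr 1
              exact Finset.sum_congr rfl fun i _ => Finset.sum_comm

/-- Let `ι : M → ℝⁿ` be an isometric embedding with second
fundamental form `h`.  In geodesic normal coordinates at a point `x`
(`g_{ij}(x) = δ_{ij}` and `∂g(x) = 0`, so `Γ(x) = 0` and
`h_{il}^α(x) = ∂_i∂_l ι^α(x)`), for every smooth compactly supported `v`:
`Σ_α |∇(grad v (ι^α))|²(x) ≤ |∇²v|²(x) + |h(x)|² |∇v|²(x)`,
where `grad v(ι^α) = g^{kl} ∂_k v ∂_l ι^α` and `G` denotes the inverse metric. -/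
theorem stmt17 {m n : ℕ} (ι : EuclideanSpace ℝ (Fin m) → EuclideanSpace ℝ (Fin n))
    (hι : ContDiff ℝ (⊤ : ℕ∞) ι) (v : EuclideanSpace ℝ (Fin m) → ℝ)
    (hv : ContDiff ℝ (⊤ : ℕ∞) v) (hvsupp : HasCompactSupport v)
    (x : EuclideanSpace ℝ (Fin m))
    (G : EuclideanSpace ℝ (Fin m) → Fin m → Fin m → ℝ)
    -- `G` is the inverse metric near `x`:
    (hGinv : ∀ᶠ y in nhds x, ∀ i k, (∑ j, met ι i j y * G y j k) = if i = k then (1:ℝ) else 0)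
    (hGdiff : ∀ j k, DifferentiableAt ℝ (fun y => G y j k) x)
    -- geodesic normal coordinates at `x`:
    (hgx : ∀ i j, met ι i j x = if i = j then (1:ℝ) else 0)
    (hdgx : ∀ p i j, pdv (fun y => met ι i j y) p x = 0) :
    (∑ α, ∑ i, (pdv (fun y => ∑ k, ∑ l, G y k l * pdv v k y * pdv (fun z => ι z α) l y) i x) ^ 2)
      ≤ (∑ i, ∑ j, (pdv (fun y => pdv v j y) i x) ^ 2) +
        (∑ i, ∑ l, ∑ α, (pdv (fun y => pdv (fun z => ι z α) l y) i x) ^ 2) *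
          ∑ k, (pdv v k x) ^ 2 := by
  classical
  have hcomp : ∀ α : Fin n, ContDiff ℝ (⊤ : ℕ∞) (fun z => ι z α) := comp_contDiff hι
  have hPd : ∀ (α : Fin n) (l : Fin m),
      DifferentiableAt ℝ (fun y => pdv (fun z => ι z α) l y) x :=
    fun α l => (pdv_contDiff (hcomp α) l).differentiable (by simp) x
  have hvd : ∀ k : Fin m, DifferentiableAt ℝ (fun y => pdv v k y) x :=
    fun k => (pdv_contDiff hv k).differentiable (by simp) x
  have hmetd : ∀ i j : Fin m, DifferentiableAt ℝ (fun y => met ι i j y) x :=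
    fun i j => (met_contDiff hι i j).differentiable (by simp) x
  -- `G x = δ`
  have hGx : ∀ j k, G x j k = if j = k then (1:ℝ) else 0 := by
    intro j k
    have h0 := hGinv.self_of_nhds j k
    have hs : (∑ j', met ι j j' x * G x j' k) = G x j k := by
      simp_rw [hgx]
      simp [ite_mul]
    rw [← hs]
    exact h0
  -- `∂G(x) = 0`
  have hdGx : ∀ (p i k : Fin m), pdv (fun y => G y i k) p x = 0 := by
    intro p i k
    have hev : (fun y => ∑ j, met ι i j y * G y j k)
        =ᶠ[nhds x] (fun _ => if i = k then (1:ℝ) else 0) := by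
      filter_upwards [hGinv] with y hy using hy i k
    have h1 : pdv (fun y => ∑ j, met ι i j y * G y j k) p x = 0 := by
      unfold pdv
      rw [hev.fderiv_eq]
      simp
    rw [pdv_sum _ (fun j _ => (hmetd i j).fun_mul (hGdiff j k)) p] at h1
    have h2 : ∀ j : Fin m, pdv (fun y => met ι i j y * G y j k) p x
        = (if i = j then (1:ℝ) else 0) * pdv (fun y => G y j k) p x := by
      intro j
      rw [pdv_mul (hmetd i j) (hGdiff j k) p, hdgx p i j, hgx i j]
      ring
    rw [Finset.sum_congr rfl fun j _ => h2 j] at h1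
    simpa [ite_mul] using h1
  -- the quantity `A_{pkl} = Σ_α ∂_p∂_k ι^α ∂_l ι^α` vanishes at `x`
  have hanti : ∀ p k l : Fin m,
      (∑ α, pdv (fun y => pdv (fun z => ι z α) k y) p x * pdv (fun z => ι z α) l x)
      + (∑ α, pdv (fun y => pdv (fun z => ι z α) l y) p x * pdv (fun z => ι z α) k x)
      = 0 := by
    intro p k l
    have h0 := hdgx p k l
    have hm : (fun y => met ι k l y)
        = fun y => ∑ α, pdv (fun z => ι z α) k y * pdv (fun z => ι z α) l y := rfl
    rw [hm, pdv_sum _ (fun α _ => (hPd α k).fun_mul (hPd α l)) p] at h0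
    rw [Finset.sum_congr rfl (fun α _ => pdv_mul (hPd α k) (hPd α l) p)] at h0
    rw [Finset.sum_add_distrib] at h0
    rw [← h0]
    congr 1
    exact Finset.sum_congr rfl fun α _ => mul_comm _ _
  have hsym : ∀ p k l : Fin m,
      (∑ α, pdv (fun y => pdv (fun z => ι z α) k y) p x * pdv (fun z => ι z α) l x)
      = (∑ α, pdv (fun y => pdv (fun z => ι z α) p y) k x * pdv (fun z => ι z α) l x) :=
    fun p k l => Finset.sum_congr rfl fun α _ => by
      rw [pdv_pdv_symm (hcomp α) p k x]
  have hA0 : ∀ i l k : Fin m,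
      (∑ α, pdv (fun y => pdv (fun z => ι z α) l y) i x * pdv (fun z => ι z α) k x) = 0 := by
    intro p k l
    have h1 := hanti p k l
    have h2 := hanti k l p
    have h3 := hanti l p k
    have e1 := hsym p k l
    have e2 := hsym p l k
    have e3 := hsym k l p
    linarith
  -- expansion of the main derivative at `x`
  have hdiffinner : ∀ (α : Fin n) (k l : Fin m),
      DifferentiableAt ℝ (fun y => G y k l * pdv v k y * pdv (fun z => ι z α) l y) x :=
    fun α k l => ((hGdiff k l).mul (hvd k)).mul (hPd α l)
  have hexp : ∀ (α : Fin n) (i : Fin m),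
      pdv (fun y => ∑ k, ∑ l, G y k l * pdv v k y * pdv (fun z => ι z α) l y) i x
      = ∑ k, (pdv (fun y => pdv v k y) i x * pdv (fun z => ι z α) k x
          + pdv v k x * pdv (fun y => pdv (fun z => ι z α) k y) i x) := by
    intro α i
    rw [pdv_sum _ (fun k _ => DifferentiableAt.fun_sum fun l _ => hdiffinner α k l) i]
    refine Finset.sum_congr rfl fun k _ => ?_
    rw [pdv_sum _ (fun l _ => hdiffinner α k l) i]
    have hterm : ∀ l : Fin m,
        pdv (fun y => G y k l * pdv v k y * pdv (fun z => ι z α) l y) i x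
        = (if k = l then (1:ℝ) else 0) *
            (pdv (fun y => pdv v k y) i x * pdv (fun z => ι z α) l x
              + pdv v k x * pdv (fun y => pdv (fun z => ι z α) l y) i x) := by
      intro l
      rw [pdv_mul ((hGdiff k l).fun_mul (hvd k)) (hPd α l) i,
        pdv_mul (hGdiff k l) (hvd k) i, hdGx i k l, hGx k l]
      ring
    rw [Finset.sum_congr rfl fun l _ => hterm l]
    simp [ite_mul]
  calc (∑ α, ∑ i,
        (pdv (fun y => ∑ k, ∑ l, G y k l * pdv v k y * pdv (fun z => ι z α) l y) i x) ^ 2)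
      = ∑ α, ∑ i, (∑ k, (pdv (fun y => pdv v k y) i x * pdv (fun z => ι z α) k x
          + pdv v k x * pdv (fun y => pdv (fun z => ι z α) k y) i x)) ^ 2 := by
        exact Finset.sum_congr rfl fun α _ => Finset.sum_congr rfl fun i _ => by
          rw [hexp α i]
    _ ≤ _ := stmt17_alg (fun α l => pdv (fun z => ι z α) l x)
        (fun α i l => pdv (fun y => pdv (fun z => ι z α) l y) i x)
        (fun k => pdv v k x) (fun i k => pdv (fun y => pdv v k y) i x)
        (fun k l => hgx k l) hA0
end
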